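/- Let f : [a,b] × [c,d] → ℝ be continuous and suppose there exist numbers c₀ > 0, δ₀ > 0 and 0 ≤ s ≤ 1 with the property that for each (x,y) ∈ [a,b] × [c,d] and each 0 < δ < δ₀ there exists (t,u) ∈ [a,b] × [c,d] with ‖(t,u) - (x,y)‖₂ ≤ δ and |f(t,u) - f(x,y)| ≥ c₀ δ^{s}. Then the lower box dimension satisfies \underline{dim}_B(G(f)) ≥ 3 - s. -/

import Mathlib

open MeasureTheory Set Filter
open scoped Classical

/-- Mixed (left-hand sided) Katugampola fractional integral of a bivariate function. -/
noncomputable def mixedKI (a c p q α β : ℝ) (f : ℝ → ℝ → ℝ) (x y : ℝ) : ℝ :=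
  ((p + 1) ^ (1 - α) * (q + 1) ^ (1 - β) / (Real.Gamma α * Real.Gamma β)) *
    ∫ s in a..x, ∫ t in c..y,
      (x ^ (p + 1) - s ^ (p + 1)) ^ (α - 1) * (y ^ (q + 1) - t ^ (q + 1)) ^ (β - 1)
        * s ^ p * t ^ q * f s t

/-- Univariate Katugampola fractional integral. -/
noncomputable def KI (a p α : ℝ) (g : ℝ → ℝ) (x : ℝ) : ℝ :=
  ((p + 1) ^ (1 - α) / Real.Gamma α) *
    ∫ t in a..x, (x ^ (p + 1) - t ^ (p + 1)) ^ (α - 1) * t ^ p * g t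

/-- Bounded variation in the sense of Arzelà on `[a,b] × [c,d]`. -/
def ArzelaBV (a b c d : ℝ) (f : ℝ → ℝ → ℝ) : Prop :=
  ∃ M > 0, ∀ (m : ℕ) (x y : ℕ → ℝ),
    x 0 = a → x m = b → y 0 = c → y m = d →
    (∀ i < m, x i ≤ x (i + 1)) → (∀ i < m, y i ≤ y (i + 1)) →
    ∑ i ∈ Finset.range m, |f (x (i + 1)) (y (i + 1)) - f (x i) (y i)| ≤ M

/-- A bounded bivariate function, monotone (nondecreasing) in each variable on the rectangle. -/
def MonotoneRect (a b c d : ℝ) (g : ℝ → ℝ → ℝ) : Prop :=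
  (∃ M : ℝ, ∀ x ∈ Icc a b, ∀ y ∈ Icc c d, |g x y| ≤ M) ∧
  (∀ x ∈ Icc a b, ∀ x' ∈ Icc a b, x ≤ x' → ∀ y ∈ Icc c d, g x y ≤ g x' y) ∧
  (∀ y ∈ Icc c d, ∀ y' ∈ Icc c d, y ≤ y' → ∀ x ∈ Icc a b, g x y ≤ g x y')

/-- Graph of a bivariate function over the rectangle `[a,b] × [c,d]`, as a subset of `ℝ³`. -/
def graphRect (a b c d : ℝ) (f : ℝ → ℝ → ℝ) : Set (ℝ × ℝ × ℝ) :=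
  {p | p.1 ∈ Icc a b ∧ p.2.1 ∈ Icc c d ∧ p.2.2 = f p.1 p.2.1}

/-- A cube of the standard `δ`-mesh of `ℝ³`. -/
def meshCube (δ : ℝ) (i j k : ℤ) : Set (ℝ × ℝ × ℝ) :=
  Icc (i * δ) ((i + 1) * δ) ×ˢ Icc (j * δ) ((j + 1) * δ) ×ˢ Icc (k * δ) ((k + 1) * δ)

/-- Number of `δ`-mesh cubes of `ℝ³` that intersect `S`. -/
noncomputable def meshCount (δ : ℝ) (S : Set (ℝ × ℝ × ℝ)) : ℕ :=
  Nat.card {p : ℤ × ℤ × ℤ | (meshCube δ p.1 p.2.1 p.2.2 ∩ S).Nonempty}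

/-- Upper box (Minkowski) dimension of a subset of `ℝ³`. -/
noncomputable def upperBoxDim (S : Set (ℝ × ℝ × ℝ)) : ℝ :=
  limsup (fun δ : ℝ => Real.log (meshCount δ S) / (-Real.log δ)) (nhdsWithin 0 (Ioi 0))

/-- Lower box (Minkowski) dimension of a subset of `ℝ³`. -/
noncomputable def lowerBoxDim (S : Set (ℝ × ℝ × ℝ)) : ℝ :=
  liminf (fun δ : ℝ => Real.log (meshCount δ S) / (-Real.log δ)) (nhdsWithin 0 (Ioi 0))

/-- Maximum range of `f` over a subset `A` of the plane. -/
noncomputable def Rf (f : ℝ → ℝ → ℝ) (A : Set (ℝ × ℝ)) : ℝ :=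
  sSup {r | ∃ p ∈ A, ∃ q ∈ A, r = |f p.1 p.2 - f q.1 q.2|}

/-- The `(i,j)`-th sub-rectangle of the `m × n` uniform partition of `[a,b] × [c,d]`. -/
def subRect (a b c d : ℝ) (m n : ℕ) (i j : ℕ) : Set (ℝ × ℝ) :=
  Icc (a + ((i : ℝ) - 1) * (b - a) / m) (a + (i : ℝ) * (b - a) / m) ×ˢ
    Icc (c + ((j : ℝ) - 1) * (d - c) / n) (c + (j : ℝ) * (d - c) / n)

/-- The sequence `a₀ = a`, `aₙ = a + (b-a)/2 + ⋯ + (b-a)/2ⁿ = b - (b-a)/2ⁿ`. -/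
noncomputable def aseq (a b : ℝ) (n : ℕ) : ℝ := b - (b - a) / 2 ^ n

/-- The affine map `ψₙ : [aₙ₋₁, aₙ] → [a₀, a₁]`. -/
noncomputable def psiN (a b : ℝ) (n : ℕ) (x : ℝ) : ℝ :=
  2 ^ n * ((aseq a b 1 - aseq a b 0) * x + aseq a b 0 * aseq a b n
    - aseq a b 1 * aseq a b (n - 1)) / (b - a)

/-- The function `Fₙ(x,y) = (1/n) φ(ψₙ(x), y) + ((n-1)/n) φ(a₀, y)` (for `n = 1` this is `φ`). -/
noncomputable def Fseq (a b : ℝ) (φ : ℝ → ℝ → ℝ) (n : ℕ) (x y : ℝ) : ℝ :=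
  (1 / (n : ℝ)) * φ (psiN a b n x) y + (((n : ℝ) - 1) / (n : ℝ)) * φ (aseq a b 0) y

open scoped Finset Topology

/-!
Let `Q` be a square of the `δ`-mesh inside the rectangle. The oscillation hypothesis at the
centre of `Q`, with radius `δ / 2`, gives two points of `Q` whose values differ by at least
`c₀ (δ / 2) ^ s`; as `f '' Q` is an interval, the graph meets at least `c₀ (δ / 2) ^ s / δ`
cubes of the column above `Q`. Summing over the `≈ (b - a) (d - c) / δ ^ 2` such squares, the
number `N δ` of mesh cubes meeting the graph satisfies `N δ ≳ δ ^ (s - 3)`. Boundedness of `f`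
gives `N δ ≲ δ ^ (-3)`, which is needed as well: the lower box dimension is a `liminf` in `ℝ`,
a junk value unless `log N δ / -log δ` is bounded.
-/

theorem le_liminf_log_div_neg_log {N : ℝ → ℝ} {K B t u : ℝ} (hK : 0 < K)
    (hlow : ∀ᶠ δ in 𝓝[>] 0, K * δ ^ (-t) ≤ N δ) (hup : ∀ᶠ δ in 𝓝[>] 0, N δ ≤ B * δ ^ (-u)) :
    t ≤ liminf (fun δ => Real.log (N δ) / -Real.log δ) (𝓝[>] 0) := by
  have hlog : Tendsto (fun δ => -Real.log δ) (𝓝[>] 0) atTop :=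
    tendsto_neg_atBot_atTop.comp Real.tendsto_log_nhdsGT_zero
  have hlim (C v : ℝ) : Tendsto (fun δ => v + Real.log C / -Real.log δ) (𝓝[>] 0) (𝓝 v) := by
    simpa using (tendsto_const_nhds.div_atTop hlog).const_add v
  have hsmall : ∀ᶠ δ in 𝓝[>] (0 : ℝ), 0 < δ ∧ 0 < -Real.log δ :=
    Filter.mem_of_superset (Ioo_mem_nhdsGT zero_lt_one) fun δ hδ =>
      ⟨hδ.1, neg_pos.2 (Real.log_neg hδ.1 hδ.2)⟩
  have hlog_bound {C v : ℝ} {δ : ℝ} (hC : 0 < C) (hδ : 0 < δ) (hδ' : 0 < -Real.log δ) :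
      Real.log (C * δ ^ (-v)) / -Real.log δ = v + Real.log C / -Real.log δ := by
    rw [Real.log_mul hC.ne' (Real.rpow_pos_of_pos hδ _).ne', Real.log_rpow hδ]
    have : Real.log δ ≠ 0 := (neg_pos.1 hδ').ne
    field_simp
    ring
  have hlower : ∀ᶠ δ in 𝓝[>] 0,
      t + Real.log K / -Real.log δ ≤ Real.log (N δ) / -Real.log δ := by
    filter_upwards [hsmall, hlow] with δ ⟨hδ, hδ'⟩ hN
    rw [← hlog_bound hK hδ hδ']
    gcongr
  have hupper : ∀ᶠ δ in 𝓝[>] 0,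
      Real.log (N δ) / -Real.log δ ≤ u + Real.log B / -Real.log δ := by
    filter_upwards [hsmall, hlow, hup] with δ ⟨hδ, hδ'⟩ hN hN'
    have hNpos : 0 < N δ := (mul_pos hK (Real.rpow_pos_of_pos hδ _)).trans_le hN
    have hB : 0 < B := pos_of_mul_pos_left (hNpos.trans_le hN') (Real.rpow_pos_of_pos hδ _).le
    rw [← hlog_bound hB hδ hδ']
    gcongr
  calc t = liminf (fun δ => t + Real.log K / -Real.log δ) (𝓝[>] 0) := (hlim K t).liminf_eq.symm
    _ ≤ _ := liminf_le_liminf hlower (hlim K t).isBoundedUnder_ge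
        ((hlim B u).isBoundedUnder_le.mono_le hupper).isCoboundedUnder_ge

theorem sub_le_card_Icc_floor (x y : ℝ) : y - x ≤ #(Finset.Icc ⌊x⌋ ⌊y⌋) := by
  rw [Int.card_Icc]
  calc y - x ≤ ((⌊y⌋ + 1 - ⌊x⌋ : ℤ) : ℝ) := by
        push_cast; linarith [Int.lt_floor_add_one y, Int.floor_le x]
    _ ≤ _ := by exact_mod_cast Int.self_le_toNat _

theorem sub_sub_two_le_card_Icc_ceil_floor (x y : ℝ) : y - x - 2 ≤ #(Finset.Icc ⌈x⌉ (⌊y⌋ - 1)) := by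
  rw [Int.card_Icc]
  calc y - x - 2 ≤ ((⌊y⌋ - 1 + 1 - ⌈x⌉ : ℤ) : ℝ) := by
        push_cast; linarith [Int.lt_floor_add_one y, Int.ceil_lt_add_one x]
    _ ≤ _ := by exact_mod_cast Int.self_le_toNat _

theorem card_Icc_ceil_floor_le {x y : ℝ} (h : x ≤ y) : #(Finset.Icc (⌈x⌉ - 1) ⌊y⌋) ≤ y - x + 2 := by
  have hpos : 0 ≤ ⌊y⌋ + 1 - (⌈x⌉ - 1) := by
    have := Int.ceil_le_floor_add_one x
    have := Int.floor_mono h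
    omega
  rw [Int.card_Icc, ← Int.cast_natCast, Int.toNat_of_nonneg hpos]
  push_cast
  linarith [Int.floor_le y, Int.le_ceil x]

theorem mem_Icc_ceil_floor_of_mem_Icc {δ x y z : ℝ} {k : ℤ} (hδ : 0 < δ)
    (hk : z ∈ Icc (k * δ) ((k + 1) * δ)) (hz : z ∈ Icc x y) :
    k ∈ Finset.Icc (⌈x / δ⌉ - 1) ⌊y / δ⌋ := by
  rw [Finset.mem_Icc, sub_le_iff_le_add, Int.ceil_le, Int.le_floor, div_le_iff₀ hδ,
    le_div_iff₀ hδ]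
  push_cast
  exact ⟨hz.1.trans hk.2, hk.1.trans hz.2⟩

theorem Icc_subset_of_mem_Icc_ceil_floor {δ x y : ℝ} {k : ℤ} (hδ : 0 < δ)
    (hk : k ∈ Finset.Icc ⌈x / δ⌉ (⌊y / δ⌋ - 1)) : Icc (k * δ) ((k + 1) * δ) ⊆ Icc x y := by
  rw [Finset.mem_Icc, Int.ceil_le, Int.le_sub_one_iff, ← Int.add_one_le_iff, Int.le_floor,
    div_le_iff₀ hδ, le_div_iff₀ hδ] at hk
  push_cast at hk
  exact Icc_subset_Icc hk.1 hk.2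

theorem exists_mem_Icc_of_mem_Icc_floor {δ x y : ℝ} {k : ℤ} (hδ : 0 < δ) (hxy : x ≤ y)
    (hk : k ∈ Finset.Icc ⌊x / δ⌋ ⌊y / δ⌋) : ∃ z ∈ Icc x y, z ∈ Icc (k * δ) ((k + 1) * δ) := by
  rw [Finset.mem_Icc, Int.le_floor, le_div_iff₀ hδ] at hk
  have hx : x < (k + 1) * δ := by
    rw [← div_lt_iff₀ hδ]
    exact (Int.lt_floor_add_one _).trans_le (by exact_mod_cast (by omega : ⌊x / δ⌋ + 1 ≤ k + 1))
  exact ⟨max x (k * δ), ⟨le_max_left _ _, max_le hxy hk.2⟩, le_max_right _ _,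
    max_le hx.le (by nlinarith)⟩

def meshIndices (δ : ℝ) (S : Set (ℝ × ℝ × ℝ)) : Set (ℤ × ℤ × ℤ) :=
  {p | (meshCube δ p.1 p.2.1 p.2.2 ∩ S).Nonempty}

def meshSquare (δ : ℝ) (i j : ℤ) : Set (ℝ × ℝ) :=
  Icc (i * δ) ((i + 1) * δ) ×ˢ Icc (j * δ) ((j + 1) * δ)

theorem meshCount_eq_ncard (δ : ℝ) (S : Set (ℝ × ℝ × ℝ)) :
    meshCount δ S = (meshIndices δ S).ncard :=
  Nat.card_coe_set_eq _

section Box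

variable {δ a₁ b₁ a₂ b₂ a₃ b₃ : ℝ} {S : Set (ℝ × ℝ × ℝ)}

theorem meshIndices_subset_box (hδ : 0 < δ)
    (hS : S ⊆ Icc a₁ b₁ ×ˢ Icc a₂ b₂ ×ˢ Icc a₃ b₃) :
    meshIndices δ S ⊆ ↑(Finset.Icc (⌈a₁ / δ⌉ - 1) ⌊b₁ / δ⌋ ×ˢ
      Finset.Icc (⌈a₂ / δ⌉ - 1) ⌊b₂ / δ⌋ ×ˢ Finset.Icc (⌈a₃ / δ⌉ - 1) ⌊b₃ / δ⌋) := by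
  rintro ⟨i, j, k⟩ ⟨x, ⟨hi, hj, hk⟩, hxS⟩
  obtain ⟨h₁, h₂, h₃⟩ := hS hxS
  simp only [Finset.coe_product, mem_prod, Finset.mem_coe]
  exact ⟨mem_Icc_ceil_floor_of_mem_Icc hδ hi h₁, mem_Icc_ceil_floor_of_mem_Icc hδ hj h₂,
    mem_Icc_ceil_floor_of_mem_Icc hδ hk h₃⟩

theorem meshIndices_finite_of_subset_box (hδ : 0 < δ)
    (hS : S ⊆ Icc a₁ b₁ ×ˢ Icc a₂ b₂ ×ˢ Icc a₃ b₃) : (meshIndices δ S).Finite :=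
  (Finset.finite_toSet _).subset (meshIndices_subset_box hδ hS)

theorem meshCount_le_of_subset_box (hδ : 0 < δ) (hδ₁ : δ ≤ 1)
    (hS : S ⊆ Icc a₁ b₁ ×ˢ Icc a₂ b₂ ×ˢ Icc a₃ b₃)
    (h₁ : a₁ ≤ b₁) (h₂ : a₂ ≤ b₂) (h₃ : a₃ ≤ b₃) :
    meshCount δ S ≤ (b₁ - a₁ + 2) * (b₂ - a₂ + 2) * (b₃ - a₃ + 2) * δ ^ (-3 : ℝ) := by
  have hcount {a b : ℝ} (h : a ≤ b) :
      #(Finset.Icc (⌈a / δ⌉ - 1) ⌊b / δ⌋) ≤ (b - a + 2) / δ :=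
    calc _ ≤ b / δ - a / δ + 2 := card_Icc_ceil_floor_le (by gcongr)
      _ ≤ (b - a + 2) / δ := by
        rw [le_div_iff₀ hδ, add_mul, sub_mul, div_mul_cancel₀ _ hδ.ne',
          div_mul_cancel₀ _ hδ.ne']
        linarith
  have hcard := Set.ncard_le_ncard (meshIndices_subset_box hδ hS) (Finset.finite_toSet _)
  rw [Set.ncard_coe_finset, Finset.card_product, Finset.card_product] at hcard
  rw [meshCount_eq_ncard, Real.rpow_neg hδ.le, Real.rpow_ofNat]
  calc ((meshIndices δ S).ncard : ℝ)
      ≤ #(Finset.Icc (⌈a₁ / δ⌉ - 1) ⌊b₁ / δ⌋) *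
          (#(Finset.Icc (⌈a₂ / δ⌉ - 1) ⌊b₂ / δ⌋) * #(Finset.Icc (⌈a₃ / δ⌉ - 1) ⌊b₃ / δ⌋)) := by
        exact_mod_cast hcard
    _ ≤ (b₁ - a₁ + 2) / δ * ((b₂ - a₂ + 2) / δ * ((b₃ - a₃ + 2) / δ)) := by
      gcongr
      exacts [hcount h₁, hcount h₂, hcount h₃]
    _ = _ := by field_simp

end Box

theorem Finset.sum_card_le_ncard {α β γ : Type*} {T : Set (α × β × γ)} (hT : T.Finite)
    (C : Finset (α × β)) (F : α × β → Finset γ)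
    (hF : ∀ ij ∈ C, ∀ k ∈ F ij, (ij.1, ij.2, k) ∈ T) : ∑ ij ∈ C, #(F ij) ≤ T.ncard := by
  rw [← Finset.card_sigma, Set.ncard_eq_toFinset_card T hT]
  refine Finset.card_le_card_of_injOn (fun x => (x.1.1, x.1.2, x.2)) ?_ ?_
  · rintro ⟨ij, k⟩ hx
    rw [Finset.mem_coe, Finset.mem_sigma] at hx
    simpa using hF ij hx.1 k hx.2
  · rintro ⟨⟨i, j⟩, k⟩ - ⟨⟨i', j'⟩, k'⟩ - h
    simp only [Prod.mk.injEq] at h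
    obtain ⟨rfl, rfl, rfl⟩ := h
    rfl

section Graph

variable {a b c d : ℝ} {f : ℝ → ℝ → ℝ}

theorem exists_abs_le_of_continuousOn
    (hf : ContinuousOn (fun p : ℝ × ℝ => f p.1 p.2) (Icc a b ×ˢ Icc c d)) :
    ∃ M, ∀ x ∈ Icc a b, ∀ y ∈ Icc c d, |f x y| ≤ M := by
  obtain ⟨M, hM⟩ := (isCompact_Icc.prod isCompact_Icc).exists_bound_of_continuousOn hf
  exact ⟨M, fun x hx y hy => hM (x, y) ⟨hx, hy⟩⟩

theorem graphRect_subset_box {M : ℝ} (hM : ∀ x ∈ Icc a b, ∀ y ∈ Icc c d, |f x y| ≤ M) :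
    graphRect a b c d f ⊆ Icc a b ×ˢ Icc c d ×ˢ Icc (-M) M := by
  rintro ⟨x, y, z⟩ ⟨hx, hy, hz⟩
  exact ⟨hx, hy, hz ▸ abs_le.1 (hM x hx y hy)⟩

theorem exists_column_subset_meshIndices {δ : ℝ} (hδ : 0 < δ) {i j : ℤ}
    (hQ : meshSquare δ i j ⊆ Icc a b ×ˢ Icc c d)
    (hf : ContinuousOn (fun p : ℝ × ℝ => f p.1 p.2) (meshSquare δ i j))
    {p q : ℝ × ℝ} (hp : p ∈ meshSquare δ i j) (hq : q ∈ meshSquare δ i j) :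
    ∃ F : Finset ℤ, |f p.1 p.2 - f q.1 q.2| / δ ≤ #F ∧
      ∀ k ∈ F, (i, j, k) ∈ meshIndices δ (graphRect a b c d f) := by
  have himage : uIcc (f p.1 p.2) (f q.1 q.2) ⊆ (fun r : ℝ × ℝ => f r.1 r.2) '' meshSquare δ i j :=
    ((isPreconnected_Icc.prod isPreconnected_Icc).image _ hf).ordConnected.uIcc_subset
      (mem_image_of_mem _ hp) (mem_image_of_mem _ hq)
  refine ⟨Finset.Icc ⌊min (f p.1 p.2) (f q.1 q.2) / δ⌋ ⌊max (f p.1 p.2) (f q.1 q.2) / δ⌋,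
    ?_, fun k hk => ?_⟩
  · rw [← max_sub_min_eq_abs', sub_div]
    exact sub_le_card_Icc_floor _ _
  · obtain ⟨z, hz, hzk⟩ := exists_mem_Icc_of_mem_Icc_floor hδ min_le_max hk
    obtain ⟨r, hr, rfl⟩ := himage hz
    exact ⟨(r.1, r.2, f r.1 r.2), ⟨hr.1, hr.2, hzk⟩, (hQ hr).1, (hQ hr).2, rfl⟩

theorem card_mul_le_meshCount_graphRect {δ L : ℝ} (hδ : 0 < δ)
    (hf : ContinuousOn (fun p : ℝ × ℝ => f p.1 p.2) (Icc a b ×ˢ Icc c d))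
    (hosc : ∀ x ∈ Icc a b, ∀ y ∈ Icc c d, ∃ t ∈ Icc a b, ∃ u ∈ Icc c d,
      √((t - x) ^ 2 + (u - y) ^ 2) ≤ δ / 2 ∧ L ≤ |f t u - f x y|) :
    #(Finset.Icc ⌈a / δ⌉ (⌊b / δ⌋ - 1) ×ˢ Finset.Icc ⌈c / δ⌉ (⌊d / δ⌋ - 1)) * (L / δ) ≤
      meshCount δ (graphRect a b c d f) := by
  set C := Finset.Icc ⌈a / δ⌉ (⌊b / δ⌋ - 1) ×ˢ Finset.Icc ⌈c / δ⌉ (⌊d / δ⌋ - 1)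
  have hcolumn : ∀ ij ∈ C, ∃ F : Finset ℤ, L / δ ≤ #F ∧
      ∀ k ∈ F, (ij.1, ij.2, k) ∈ meshIndices δ (graphRect a b c d f) := by
    rintro ⟨i, j⟩ hij
    rw [Finset.mem_product] at hij
    have hQ : meshSquare δ i j ⊆ Icc a b ×ˢ Icc c d :=
      prod_mono (Icc_subset_of_mem_Icc_ceil_floor hδ hij.1)
        (Icc_subset_of_mem_Icc_ceil_floor hδ hij.2)
    have hcentre : ((i + 1 / 2) * δ, (j + 1 / 2) * δ) ∈ meshSquare δ i j := by
      refine ⟨⟨?_, ?_⟩, ?_, ?_⟩ <;> dsimp only <;> nlinarith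
    obtain ⟨t, ht, u, hu, hdist, hL⟩ := hosc _ (hQ hcentre).1 _ (hQ hcentre).2
    have ht' : |t - (i + 1 / 2) * δ| ≤ δ / 2 :=
      (Real.abs_le_sqrt (le_add_of_nonneg_right (sq_nonneg _))).trans hdist
    have hu' : |u - (j + 1 / 2) * δ| ≤ δ / 2 :=
      (Real.abs_le_sqrt (le_add_of_nonneg_left (sq_nonneg _))).trans hdist
    rw [abs_le] at ht' hu'
    have htu : (t, u) ∈ meshSquare δ i j :=
      ⟨⟨by linarith, by linarith⟩, by linarith, by linarith⟩
    obtain ⟨F, hF, hFmem⟩ := exists_column_subset_meshIndices hδ hQ (hf.mono hQ) htu hcentre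
    exact ⟨F, (div_le_div_of_nonneg_right hL hδ.le).trans hF, hFmem⟩
  choose! F hFcard hFmem using hcolumn
  obtain ⟨M, hM⟩ := exists_abs_le_of_continuousOn hf
  calc #C * (L / δ) = ∑ ij ∈ C, L / δ := by rw [Finset.sum_const, nsmul_eq_mul]
    _ ≤ ∑ ij ∈ C, (#(F ij) : ℝ) := Finset.sum_le_sum hFcard
    _ ≤ meshCount δ (graphRect a b c d f) := by
      rw [meshCount_eq_ncard]
      exact_mod_cast Finset.sum_card_le_ncard
        (meshIndices_finite_of_subset_box hδ (graphRect_subset_box hM)) C F hFmem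

end Graph

theorem le_meshCount_graphRect {a b c d c₀ δ₀ s : ℝ} {f : ℝ → ℝ → ℝ} (hc₀ : 0 < c₀)
    (hf : ContinuousOn (fun p : ℝ × ℝ => f p.1 p.2) (Icc a b ×ˢ Icc c d))
    (hosc : ∀ x ∈ Icc a b, ∀ y ∈ Icc c d, ∀ δ : ℝ, 0 < δ → δ < δ₀ →
      ∃ t ∈ Icc a b, ∃ u ∈ Icc c d,
        Real.sqrt ((t - x) ^ 2 + (u - y) ^ 2) ≤ δ ∧ c₀ * δ ^ s ≤ |f t u - f x y|)
    {δ : ℝ} (hδ : 0 < δ) (hδ₀ : δ < 2 * δ₀) (hδab : 4 * δ ≤ b - a) (hδcd : 4 * δ ≤ d - c) :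
    c₀ * (b - a) * (d - c) / (4 * 2 ^ s) * δ ^ (-(3 - s)) ≤
      meshCount δ (graphRect a b c d f) := by
  have hside {x y : ℝ} (h : 4 * δ ≤ y - x) :
      (y - x) / (2 * δ) ≤ #(Finset.Icc ⌈x / δ⌉ (⌊y / δ⌋ - 1)) := by
    have hsplit : y / δ - x / δ - 2 = (y - x) / (2 * δ) + (y - x - 4 * δ) / (2 * δ) := by
      field_simp
      ring
    refine le_trans ?_ (sub_sub_two_le_card_Icc_ceil_floor _ _)
    rw [hsplit, le_add_iff_nonneg_right]
    exact div_nonneg (sub_nonneg.2 h) (by positivity)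
  have hcount := card_mul_le_meshCount_graphRect hδ hf (L := c₀ * (δ / 2) ^ s)
    fun x hx y hy => hosc x hx y hy (δ / 2) (half_pos hδ) (by linarith)
  rw [Finset.card_product, Nat.cast_mul] at hcount
  refine le_trans ?_ hcount
  calc c₀ * (b - a) * (d - c) / (4 * 2 ^ s) * δ ^ (-(3 - s))
      = (b - a) / (2 * δ) * ((d - c) / (2 * δ)) * (c₀ * (δ / 2) ^ s / δ) := by
        rw [Real.div_rpow hδ.le zero_le_two, neg_sub, Real.rpow_sub hδ, Real.rpow_ofNat]
        field_simp
        ring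
    _ ≤ _ := by
        gcongr ?_ * ?_ * _
        · exact div_nonneg (by linarith) (by positivity)
        exacts [hside hδab, hside hδcd]

theorem lowerBoxDim_graph_ge_general (a b c d c₀ δ₀ s : ℝ) (hab : a < b) (hcd : c < d)
    (hc₀ : 0 < c₀) (hδ₀ : 0 < δ₀)
    (f : ℝ → ℝ → ℝ)
    (hf : ContinuousOn (fun pt : ℝ × ℝ => f pt.1 pt.2) (Icc a b ×ˢ Icc c d))
    (hosc : ∀ x ∈ Icc a b, ∀ y ∈ Icc c d, ∀ δ : ℝ, 0 < δ → δ < δ₀ →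
      ∃ t ∈ Icc a b, ∃ u ∈ Icc c d,
        Real.sqrt ((t - x) ^ 2 + (u - y) ^ 2) ≤ δ ∧
        c₀ * δ ^ s ≤ |f t u - f x y|) :
    3 - s ≤ lowerBoxDim (graphRect a b c d f) := by
  obtain ⟨M, hM⟩ := exists_abs_le_of_continuousOn hf
  have hM₀ : 0 ≤ M :=
    (abs_nonneg _).trans (hM a (left_mem_Icc.2 hab.le) c (left_mem_Icc.2 hcd.le))
  have hK : 0 < c₀ * (b - a) * (d - c) / (4 * 2 ^ s) := by
    have := sub_pos.2 hab
    have := sub_pos.2 hcd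
    positivity
  have hsmall : 0 < min (2 * δ₀) (min ((b - a) / 4) ((d - c) / 4)) := by
    simp only [lt_min_iff]
    exact ⟨by positivity, by linarith, by linarith⟩
  refine le_liminf_log_div_neg_log (B := (b - a + 2) * (d - c + 2) * (M - -M + 2)) (u := 3)
    hK ?_ ?_
  · filter_upwards [Ioo_mem_nhdsGT hsmall] with δ ⟨hδ, hδ'⟩
    simp only [lt_min_iff] at hδ'
    exact le_meshCount_graphRect hc₀ hf hosc hδ hδ'.1 (by linarith) (by linarith)
  · filter_upwards [Ioc_mem_nhdsGT zero_lt_one] with δ ⟨hδ, hδ₁⟩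
    exact meshCount_le_of_subset_box hδ hδ₁ (graphRect_subset_box hM) hab.le hcd.le
      (by linarith)

/-- a reverse Hölder-type oscillation condition of exponent `s`
gives the lower bound `3 - s` on the lower box dimension of the graph. -/
theorem lowerBoxDim_graph_ge (a b c d c₀ δ₀ s : ℝ) (hab : a < b) (hcd : c < d)
    (hc₀ : 0 < c₀) (hδ₀ : 0 < δ₀) (hs0 : 0 ≤ s) (hs1 : s ≤ 1)
    (f : ℝ → ℝ → ℝ)
    (hf : ContinuousOn (fun pt : ℝ × ℝ => f pt.1 pt.2) (Icc a b ×ˢ Icc c d))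
    (hosc : ∀ x ∈ Icc a b, ∀ y ∈ Icc c d, ∀ δ : ℝ, 0 < δ → δ < δ₀ →
      ∃ t ∈ Icc a b, ∃ u ∈ Icc c d,
        Real.sqrt ((t - x) ^ 2 + (u - y) ^ 2) ≤ δ ∧
        c₀ * δ ^ s ≤ |f t u - f x y|) :
    3 - s ≤ lowerBoxDim (graphRect a b c d f) :=
  lowerBoxDim_graph_ge_general a b c d c₀ δ₀ s hab hcd hc₀ hδ₀ f hf hosc
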